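/- arXiv:0812.0196 — 4 statements merged into one kernel-verified Lean document; each statement's English description precedes it below -/
import Mathlib

section
/- Let F ⊆ {−1,1}^s contain the point (1,...,1), and suppose the columns of its design matrix M (including the constant column of ones) are linearly dependent over the rationals. Then there exists a nonempty subset I ⊆ {1,...,s} such that ∏_{i∈I} x_i = 1 for all x ∈ F; i.e., F is contained in a regular fractional factorial design. -/
/-!
Subtracting the column relation `c` at `x` from that at the all-ones point shows that the
coefficients `d i = c (i + 1)` sum to zero over the set `{i | x i = -1}` of every `x ∈ F`.
Rescale `d` to an integer vector with an odd entry; reducing mod 2, each of these sets meets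
`I = {i | d i odd}` in an even number of points, so `∏ i ∈ I, x i = 1`.
-/

open Finset

theorem Int.even_sum_iff_even_card_odd {ι : Type*} (s : Finset ι) (f : ι → ℤ) :
    Even (∑ i ∈ s, f i) ↔ Even #{i ∈ s | Odd (f i)} := by
  have hmod2 : ∀ i, (f i : ZMod 2) = if Odd (f i) then 1 else 0 := fun i => by
    split_ifs with h
    · exact ZMod.intCast_eq_one_iff_odd.mpr h
    · exact ZMod.intCast_eq_zero_iff_even.mpr (Int.not_odd_iff_even.mp h)
  rw [← ZMod.intCast_eq_zero_iff_even, ← ZMod.natCast_eq_zero_iff_even, Int.cast_sum,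
    card_filter, Nat.cast_sum]
  simp only [hmod2, Nat.cast_ite, Nat.cast_one, Nat.cast_zero]

theorem prod_eq_neg_one_pow_card_filter {ι R : Type*} [CommRing R] (I : Finset ι) {x : ι → R}
    (hx : ∀ i, x i = 1 ∨ x i = -1) [DecidablePred fun i => x i = -1] :
    ∏ i ∈ I, x i = (-1) ^ #{i ∈ I | x i = -1} := by
  have hx' : ∀ i ∈ I, x i = if x i = -1 then -1 else 1 := fun i _ => by
    rcases hx i with h | h <;> simp [h]
  rw [prod_congr rfl hx', prod_ite, prod_const, prod_const_one, mul_one]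

theorem sum_filter_eq_neg_one_eq_zero {ι : Type*} [Fintype ι] {d x : ι → ℚ}
    (hx : ∀ i, x i = 1 ∨ x i = -1) (h : ∑ i, d i * x i = ∑ i, d i) :
    ∑ i with x i = -1, d i = 0 := by
  have hdx : ∀ i ∈ univ, d i * x i = if x i = -1 then -d i else d i := fun i _ => by
    rcases hx i with h | h <;> norm_num [h]
  rw [sum_congr rfl hdx, sum_ite, sum_neg_distrib, ← sum_filter_add_sum_filter_not univ
    (fun i => x i = -1) d] at h
  linarith

theorem Int.exists_odd_of_ne_zero {ι : Type*} [Fintype ι] {z : ι → ℤ} (hz : z ≠ 0) :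
    ∃ g : ℤ, g ≠ 0 ∧ ∃ m : ι → ℤ, (∃ i, Odd (m i)) ∧ ∀ i, z i = g * m i := by
  obtain ⟨i₀, hi₀⟩ := Function.ne_iff.mp hz
  obtain ⟨m, hzm, hm⟩ := univ.extract_gcd z ⟨i₀, mem_univ _⟩
  refine ⟨univ.gcd z, fun h => hi₀ ((Finset.gcd_eq_zero_iff.mp h) i₀ (mem_univ _)), m, ?_,
    fun i => hzm i (mem_univ _)⟩
  by_contra! hEven
  have h2 : (2 : ℤ) ∣ univ.gcd m :=
    Finset.dvd_gcd fun i _ => (Int.not_odd_iff_even.mp (hEven i)).two_dvd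
  rw [hm] at h2
  omega

theorem Rat.exists_int_multiple {ι : Type*} [Fintype ι] {d : ι → ℚ} (hd : d ≠ 0) :
    ∃ q : ℚ, ∃ z : ι → ℤ, z ≠ 0 ∧ ∀ i, (z i : ℚ) = q * d i := by
  obtain ⟨⟨b, hb⟩, hbd⟩ := IsLocalization.exist_integer_multiples (nonZeroDivisors ℤ) univ d
  choose z hz using fun i => hbd i (mem_univ i)
  have hb0 : (b : ℚ) ≠ 0 := by exact_mod_cast nonZeroDivisors.ne_zero hb
  refine ⟨b, z, ?_, fun i => by simpa [zsmul_eq_mul] using hz i⟩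
  rintro rfl
  refine hd (funext fun i => ?_)
  have := hz i
  simp only [Pi.zero_apply, zsmul_eq_mul] at this
  exact (mul_eq_zero.mp this.symm).resolve_left hb0

theorem Rat.exists_odd_int_multiple {ι : Type*} [Fintype ι] {d : ι → ℚ} (hd : d ≠ 0) :
    ∃ q : ℚ, ∃ m : ι → ℤ, (∃ i, Odd (m i)) ∧ ∀ i, (m i : ℚ) = q * d i := by
  obtain ⟨q, z, hz, hzd⟩ := Rat.exists_int_multiple hd
  obtain ⟨g, hg, m, hodd, hzm⟩ := Int.exists_odd_of_ne_zero hz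
  have hg' : (g : ℚ) ≠ 0 := Int.cast_ne_zero.mpr hg
  refine ⟨q / g, m, hodd, fun i => ?_⟩
  rw [div_mul_eq_mul_div, ← hzd, hzm, Int.cast_mul, mul_div_cancel_left₀ _ hg']

theorem exists_prod_eq_one_of_sum_filter_eq_zero {ι : Type*} [Fintype ι] {F : Set (ι → ℚ)}
    (hpm : ∀ x ∈ F, ∀ i, x i = 1 ∨ x i = -1) {m : ι → ℤ} (hodd : ∃ i, Odd (m i))
    (hrel : ∀ x ∈ F, ∑ i with x i = -1, m i = 0) :
    ∃ I : Finset ι, I.Nonempty ∧ ∀ x ∈ F, ∏ i ∈ I, x i = 1 := by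
  obtain ⟨i₀, hi₀⟩ := hodd
  refine ⟨({i | Odd (m i)} : Finset ι), ⟨i₀, by simpa using hi₀⟩, fun x hx => ?_⟩
  have hEven : Even #{i ∈ {i | x i = -1} | Odd (m i)} :=
    (Int.even_sum_iff_even_card_odd _ m).mp (hrel x hx ▸ Even.zero)
  have hcard : #{i ∈ {i | Odd (m i)} | x i = -1} = #{i ∈ {i | x i = -1} | Odd (m i)} := by
    simp only [filter_filter, and_comm]
  rw [prod_eq_neg_one_pow_card_filter _ (hpm x hx), hcard, hEven.neg_one_pow]

theorem columns_dependent_implies_subset_design_general (s : ℕ) (F : Set (Fin s → ℚ))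
    (hpm : ∀ x ∈ F, ∀ i, x i = 1 ∨ x i = -1)
    (hone : (fun _ => (1 : ℚ)) ∈ F)
    (hdep : ∃ c : Fin (s + 1) → ℚ, c ≠ 0 ∧
        ∀ x ∈ F, c 0 + ∑ i : Fin s, c i.succ * x i = 0) :
    ∃ I : Finset (Fin s), I.Nonempty ∧ ∀ x ∈ F, ∏ i ∈ I, x i = 1 := by
  obtain ⟨c, hc, hrel⟩ := hdep
  have hsum : c 0 + ∑ i : Fin s, c i.succ = 0 := by simpa using hrel _ hone
  have hd : (fun i : Fin s => c i.succ) ≠ 0 := by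
    intro hd
    have hd' (i : Fin s) : c i.succ = 0 := congrFun hd i
    exact hc (funext fun j => Fin.cases (by simpa [hd'] using hsum) hd' j)
  obtain ⟨q, m, hodd, hmd⟩ := Rat.exists_odd_int_multiple hd
  refine exists_prod_eq_one_of_sum_filter_eq_zero hpm hodd fun x hx => ?_
  have hsupp : ∑ i with x i = -1, c i.succ = 0 :=
    sum_filter_eq_neg_one_eq_zero (hpm x hx) (by linarith [hrel x hx])
  have : ((∑ i with x i = -1, m i : ℤ) : ℚ) = 0 := by
    rw [Int.cast_sum, sum_congr rfl fun i _ => hmd i, ← mul_sum, hsupp, mul_zero]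
  exact_mod_cast this

/-- if the columns of the design matrix are linearly dependent over ℚ,
then F satisfies a generating relation, i.e. is contained in a regular design. -/
theorem columns_dependent_implies_subset_design (s : ℕ) (F : Set (Fin s → ℚ))
    (hpm : ∀ x ∈ F, ∀ i, x i = 1 ∨ x i = -1)
    (hone : (fun _ => (1 : ℚ)) ∈ F)
    (hcol : ∀ i : Fin s, ∃ x ∈ F, x i = -1)
    (hdep : ∃ c : Fin (s + 1) → ℚ, c ≠ 0 ∧
        ∀ x ∈ F, c 0 + ∑ i : Fin s, c i.succ * x i = 0) :
    ∃ I : Finset (Fin s), I.Nonempty ∧ ∀ x ∈ F, ∏ i ∈ I, x i = 1 :=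
  columns_dependent_implies_subset_design_general s F hpm hone hdep
end

section
/- Let F ⊆ {−1,1}^{r−1} be a saturated design with r runs containing (1,...,1), with square design matrix M ∈ {−1,1}^{r×r} (first column of ones) whose other columns each contain a −1. Then F is an affinely full-dimensional factorial design (i.e., F is not a proper subset of any regular fractional factorial design) if and only if det M is not divisible by 2^r. -/
/-!
Write each entry of a run as `w k i = (-1) ^ b k i` with `b k i ∈ ZMod 2`. Subtracting the
all-ones row `w 0` from the other rows and expanding along the first column gives
`det M = (-2) ^ s * det B`, where `B` is the `0/1` matrix of `b` on the runs `1, …, s`.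
Hence `2 ^ (s + 1) ∣ det M` iff `B` is singular over `ZMod 2`, i.e. iff some nonempty set `I`
of factors has `∑ i ∈ I, b k i = 0` on every run, which says that the whole design lies in the
regular fraction `∏ i ∈ I, x i = 1`.
-/

open Matrix Finset

section SignProducts

variable {ι : Type*} {u : ι → ℤ}

lemma prod_eq_neg_one_pow_sum (hu : ∀ i, u i = 1 ∨ u i = -1) (I : Finset ι) :
    ∏ i ∈ I, u i = (-1) ^ ∑ i ∈ I, if u i = 1 then 0 else 1 := by
  rw [← prod_pow_eq_pow_sum]
  refine prod_congr rfl fun i _ => ?_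
  rcases hu i with h | h <;> simp [h]

lemma prod_eq_neg_one_iff_ne_one (hu : ∀ i, u i = 1 ∨ u i = -1) (I : Finset ι) :
    ∏ i ∈ I, u i = -1 ↔ ∏ i ∈ I, u i ≠ 1 := by
  rw [prod_eq_neg_one_pow_sum hu]
  rcases neg_one_pow_eq_or ℤ (∑ i ∈ I, if u i = 1 then 0 else 1) with h | h <;> simp [h]

lemma prod_eq_one_iff_sum_zmod_two_eq_zero (hu : ∀ i, u i = 1 ∨ u i = -1) (I : Finset ι) :
    ∏ i ∈ I, u i = 1 ↔ ∑ i ∈ I, (if u i = 1 then 0 else 1 : ZMod 2) = 0 := by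
  rw [prod_eq_neg_one_pow_sum hu, neg_one_pow_eq_one_iff_even (by decide),
    ← ZMod.natCast_eq_zero_iff_even]
  push_cast [Nat.cast_ite]
  rfl

end SignProducts

section ZModTwo

variable {m ι : Type*} [Fintype ι] [DecidableEq ι]

lemma mulVec_indicator_eq_sum {R : Type*} [Semiring R] (N : Matrix m ι R) (I : Finset ι) :
    N *ᵥ (fun i => if i ∈ I then 1 else 0) = fun k => ∑ i ∈ I, N k i := by
  ext k
  simp [mulVec, dotProduct, mul_ite, sum_ite_mem]

lemma eq_indicator_support_of_zmod_two (v : ι → ZMod 2) :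
    v = fun i => if i ∈ univ.filter (v · ≠ 0) then 1 else 0 := by
  ext i
  have : ∀ x : ZMod 2, x = if x ≠ 0 then 1 else 0 := by decide
  simpa using this (v i)

lemma ZMod.exists_mulVec_eq_zero_iff_exists_finset (N : Matrix m ι (ZMod 2)) :
    (∃ v, v ≠ 0 ∧ N *ᵥ v = 0) ↔ ∃ I : Finset ι, I.Nonempty ∧ ∀ k, ∑ i ∈ I, N k i = 0 := by
  constructor
  · rintro ⟨v, hv, hNv⟩
    rw [eq_indicator_support_of_zmod_two v, mulVec_indicator_eq_sum] at hNv
    obtain ⟨i, hi⟩ := Function.ne_iff.mp hv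
    exact ⟨_, ⟨i, by simpa using hi⟩, congrFun hNv⟩
  · rintro ⟨I, ⟨i, hi⟩, hI⟩
    refine ⟨fun i => if i ∈ I then 1 else 0, fun h => ?_, ?_⟩
    · simpa [hi] using congrFun h i
    · rw [mulVec_indicator_eq_sum]
      exact funext hI

end ZModTwo

lemma Matrix.det_of_cases_one {R : Type*} [CommRing R] {s : ℕ} (A : Fin (s + 1) → Fin s → R) :
    (of fun k j => Fin.cases 1 (A k) j : Matrix (Fin (s + 1)) (Fin (s + 1)) R).det =
      (of fun k i => A k.succ i - A 0 i : Matrix (Fin s) (Fin s) R).det := by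
  -- `N` is the result of subtracting row `0` from every other row.
  let N : Matrix (Fin (s + 1)) (Fin (s + 1)) R := of fun k j =>
    Fin.cases (Fin.cases 1 (A 0) j) (fun k => Fin.cases 0 (fun i => A k.succ i - A 0 i) j) k
  have hrow : (of fun k j => Fin.cases 1 (A k) j : Matrix _ _ R).det = N.det :=
    det_eq_of_forall_row_eq_smul_add_const (Fin.cases 0 fun _ => 1) 0 rfl fun k j => by
      cases k using Fin.cases <;> cases j using Fin.cases <;> simp [N]
  rw [hrow, det_succ_column_zero, Fin.sum_univ_succ]
  simp [N, submatrix]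

lemma Int.dvd_det_iff_det_map_zmod_eq_zero {n : Type*} [Fintype n] [DecidableEq n] (q : ℕ)
    (B : Matrix n n ℤ) : (q : ℤ) ∣ B.det ↔ (B.map (Int.cast : ℤ → ZMod q)).det = 0 := by
  rw [← ZMod.intCast_zmod_eq_zero_iff_dvd]
  exact .of_eq <| congrArg (· = 0) ((Int.castRingHom (ZMod q)).map_det B)

lemma Int.two_pow_succ_dvd_neg_two_pow_mul_iff (s : ℕ) (d : ℤ) :
    2 ^ (s + 1) ∣ (-2) ^ s * d ↔ 2 ∣ d := by
  rw [neg_pow, mul_assoc, ((isUnit_neg_one (α := ℤ)).pow s).dvd_mul_left, pow_succ,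
    mul_dvd_mul_iff_left (pow_ne_zero s two_ne_zero)]

theorem saturated_afd_iff_det_not_div_general (s : ℕ) (w : Fin (s + 1) → Fin s → ℤ)
    (hpm : ∀ k i, w k i = 1 ∨ w k i = -1)
    (hone : w 0 = fun _ => 1) :
    (∀ I : Finset (Fin s), I.Nonempty → ∃ k, ∏ i ∈ I, w k i = -1) ↔
      ¬ ((2 : ℤ) ^ (s + 1) ∣
        (Matrix.of (fun k j => Fin.cases 1 (fun i => w k i) j) :
          Matrix (Fin (s + 1)) (Fin (s + 1)) ℤ).det) := by
  classical
  set B : Matrix (Fin s) (Fin s) ℤ := of fun k i => if w k.succ i = 1 then 0 else 1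
  have hdet : (of fun k j => Fin.cases 1 (fun i => w k i) j :
      Matrix (Fin (s + 1)) (Fin (s + 1)) ℤ).det = (-2) ^ s * B.det := by
    have hsub : (of fun k i => w k.succ i - w 0 i : Matrix (Fin s) (Fin s) ℤ) = (-2 : ℤ) • B := by
      ext k i
      rcases hpm k.succ i with h | h <;> simp [B, hone, h]
    rw [det_of_cases_one, hsub, det_smul, Fintype.card_fin]
  have hsing : 2 ^ (s + 1) ∣ (-2) ^ s * B.det ↔
      ∃ I : Finset (Fin s), I.Nonempty ∧ ∀ k, ∏ i ∈ I, w k i = 1 := by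
    rw [Int.two_pow_succ_dvd_neg_two_pow_mul_iff, ← Nat.cast_two (R := ℤ),
      Int.dvd_det_iff_det_map_zmod_eq_zero, ← exists_mulVec_eq_zero_iff,
      ZMod.exists_mulVec_eq_zero_iff_exists_finset]
    refine exists_congr fun I => and_congr_right fun _ => ?_
    simp only [Fin.forall_fin_succ, hone, prod_eq_one_iff_sum_zmod_two_eq_zero (hpm _)]
    simp [B, apply_ite (Int.cast : ℤ → ZMod 2)]
  rw [hdet, hsing]
  push Not
  simp only [prod_eq_neg_one_iff_ne_one (hpm _)]

/-- a saturated design is affinely full-dimensional iff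
the determinant of its design matrix is not divisible by 2^r. -/
theorem saturated_afd_iff_det_not_div (s : ℕ) (w : Fin (s + 1) → Fin s → ℤ)
    (hinj : Function.Injective w)
    (hpm : ∀ k i, w k i = 1 ∨ w k i = -1)
    (hone : w 0 = fun _ => 1)
    (hcol : ∀ i : Fin s, ∃ k, w k i = -1) :
    (∀ I : Finset (Fin s), I.Nonempty → ∃ k, ∏ i ∈ I, w k i = -1) ↔
      ¬ ((2 : ℤ) ^ (s + 1) ∣
        (Matrix.of (fun k j => Fin.cases 1 (fun i => w k i) j) :
          Matrix (Fin (s + 1)) (Fin (s + 1)) ℤ).det) :=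
  saturated_afd_iff_det_not_div_general s w hpm hone
end

section
/- If a ±1 matrix M ∈ {−1,1}^{r×r} with r ≡ 5 (mod 8) attains the Barba bound det M = (2r−1)^{1/2}(r−1)^{(r−1)/2} (with 2r−1 a perfect square), and M has first row and first column all ones with each other column containing a −1, then the saturated design with design matrix M is an affinely full-dimensional factorial design. -/
/-!
If the saturated design were not affinely full-dimensional, some nonempty set `I` of factor
columns would have product `1` in every run. Replacing one column of `I` by
`∑ i ∈ I, (col i - col 0)` keeps the determinant, and this new column is `≡ 0 (mod 4)`,
because a sum `∑ (x i - 1)` of `±1`'s is congruent to `∏ x i - 1` mod 4. If `j` is the replaced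
column, subtracting row `j` from the other rows makes those `r - 1` rows even while column `j`
stays divisible by 4, which yields one more factor 2: so `2 ^ r ∣ det M`. For `r = 4q + 1` with `q` odd, however, the Barba value
`m · (4q) ^ (2q) = 2 ^ (4q) · m · q ^ (2q)` is divisible only by `2 ^ (r - 1)`.
-/

open Finset Matrix

theorem Matrix.det_updateCol_mulVec {n R : Type*} [Fintype n] [DecidableEq n] [CommRing R]
    (A : Matrix n n R) (j : n) (c : n → R) :
    (A.updateCol j (A *ᵥ c)).det = c j * A.det := by
  rw [← cramer_apply, cramer_eq_adjugate_mulVec, mulVec_mulVec, adjugate_mul, smul_mulVec,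
    one_mulVec, Pi.smul_apply, smul_eq_mul, mul_comm]

theorem Matrix.prod_mul_prod_dvd_det {n R : Type*} [Fintype n] [DecidableEq n] [CommRing R]
    (M : Matrix n n R) (a b : n → R) (h : ∀ k l, a k * b l ∣ M k l) :
    (∏ k, a k) * (∏ l, b l) ∣ M.det := by
  choose C hC using h
  have hM : M = diagonal a * of C * diagonal b := by
    ext k l
    simp [hC k l, mul_assoc, mul_comm (b l)]
  rw [hM, det_mul, det_mul, det_diagonal, det_diagonal, mul_right_comm]
  exact dvd_mul_right _ _

theorem Matrix.two_pow_card_dvd_det_of_odd_of_four_dvd {n : Type*} [Fintype n] [DecidableEq n]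
    (B : Matrix n n ℤ) (j : n) (hodd : ∀ k l, l ≠ j → Odd (B k l)) (hfour : ∀ k, 4 ∣ B k j) :
    2 ^ Fintype.card n ∣ B.det := by
  set P : Matrix n n ℤ := of fun k l => B k l + (if k = j then 0 else -1) * B j l
  have hP : P.det = B.det :=
    det_eq_of_forall_row_eq_smul_add_const _ j (if_pos rfl) fun _ _ => rfl
  have hdvd : ∀ k l, (if k = j then 1 else 2) * (if l = j then 2 else 1) ∣ P k l := by
    intro k l
    by_cases hk : k = j <;> by_cases hl : l = j
    · subst hk hl
      simpa [P] using (dvd_mul_left 2 2).trans (hfour _)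
    · simp [hk, hl]
    · subst hl
      simpa [P, hk, ← sub_eq_add_neg] using dvd_sub (hfour k) (hfour l)
    · simpa [P, hk, hl, ← sub_eq_add_neg] using ((hodd k l hl).sub_odd (hodd j l hl)).two_dvd
  have hweights : ∀ k, ((if k = j then 1 else 2) * (if k = j then 2 else 1) : ℤ) = 2 := by
    intro k
    split_ifs <;> rfl
  have h := P.prod_mul_prod_dvd_det _ _ hdvd
  rwa [← prod_mul_distrib, prod_congr rfl fun k _ => hweights k, prod_const, card_univ, hP] at h

theorem Int.prod_eq_one_or_neg_one {ι : Type*} (s : Finset ι) (x : ι → ℤ)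
    (hx : ∀ i ∈ s, x i = 1 ∨ x i = -1) : ∏ i ∈ s, x i = 1 ∨ ∏ i ∈ s, x i = -1 :=
  Int.isUnit_iff.mp <| IsUnit.prod_iff.mpr fun i hi => Int.isUnit_iff.mpr (hx i hi)

theorem Int.sum_sub_one_modEq_prod_sub_one {ι : Type*} (s : Finset ι) (x : ι → ℤ)
    (hx : ∀ i ∈ s, x i = 1 ∨ x i = -1) :
    ∑ i ∈ s, (x i - 1) ≡ ∏ i ∈ s, x i - 1 [ZMOD 4] := by
  induction s using Finset.cons_induction with
  | empty => rfl
  | cons a s ha ih =>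
    have hp := Int.prod_eq_one_or_neg_one s x fun i hi => hx i (mem_cons_of_mem hi)
    have ih := ih fun i hi => hx i (mem_cons_of_mem hi)
    rw [sum_cons, prod_cons]
    unfold Int.ModEq at ih ⊢
    rcases hx a (mem_cons_self a s) with h | h <;> rcases hp with hp | hp <;>
      simp only [h, hp] at ih ⊢ <;> omega

theorem Matrix.two_pow_card_dvd_det_of_prod_eq_one {n : Type*} [Fintype n] [DecidableEq n]
    (A : Matrix n n ℤ) (hA : ∀ k l, A k l = 1 ∨ A k l = -1) (l₀ : n) (hl₀ : ∀ k, A k l₀ = 1)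
    (I : Finset n) (hl₀I : l₀ ∉ I) (j : n) (hj : j ∈ I) (hprod : ∀ k, ∏ l ∈ I, A k l = 1) :
    2 ^ Fintype.card n ∣ A.det := by
  set c : n → ℤ := ∑ l ∈ I, (Pi.single l 1 - Pi.single l₀ 1)
  have hcj : c j = 1 := by
    simp [c, Finset.sum_apply, Pi.single_apply, hj, ne_of_mem_of_not_mem hj hl₀I]
  have hAc : ∀ k, (A *ᵥ c) k = ∑ l ∈ I, (A k l - 1) := by
    intro k
    simp only [c, mulVec_sum, mulVec_sub, mulVec_single_one, Finset.sum_apply, Pi.sub_apply,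
      col_apply, hl₀]
  rw [← one_mul A.det, ← hcj, ← det_updateCol_mulVec]
  refine two_pow_card_dvd_det_of_odd_of_four_dvd _ j (fun k l hl => ?_) fun k => ?_
  · rw [updateCol_ne hl]
    rcases hA k l with h | h <;> simp [h]
  · rw [updateCol_self, hAc, ← Int.modEq_zero_iff_dvd]
    simpa [hprod k] using Int.sum_sub_one_modEq_prod_sub_one I (A k) fun l _ => hA k l

theorem two_pow_dvd_det_of_forall_prod_eq_one {s : ℕ} (w : Fin (s + 1) → Fin s → ℤ)
    (hpm : ∀ k i, w k i = 1 ∨ w k i = -1) (I : Finset (Fin s)) (hI : I.Nonempty)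
    (hrows : ∀ k, ∏ i ∈ I, w k i = 1) :
    2 ^ (s + 1) ∣ (of fun k j => Fin.cases 1 (fun i => w k i) j :
      Matrix (Fin (s + 1)) (Fin (s + 1)) ℤ).det := by
  set M : Matrix (Fin (s + 1)) (Fin (s + 1)) ℤ := of fun k j => Fin.cases 1 (fun i => w k i) j
  have hM : ∀ k l, M k l = 1 ∨ M k l = -1 := by
    intro k l
    cases l using Fin.cases
    · simp [M]
    · exact hpm k _
  obtain ⟨i, hi⟩ := hI
  simpa using M.two_pow_card_dvd_det_of_prod_eq_one hM 0 (fun _ => rfl) (I.map (Fin.succEmb s))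
    (by simp [Fin.succ_ne_zero]) i.succ (mem_map_of_mem _ hi) fun k => by simpa [M] using hrows k

theorem Int.not_two_pow_succ_dvd_mul_pow_half {s m : ℕ} (hs : s % 8 = 4) (hm : Odd m) :
    ¬ (2 : ℤ) ^ (s + 1) ∣ m * (s : ℤ) ^ (s / 2) := by
  obtain ⟨q, rfl⟩ : 4 ∣ s := by omega
  have hq : Odd q := by rw [Nat.odd_iff]; omega
  have hpow : ((4 * q : ℕ) : ℤ) ^ (4 * q / 2) = 2 ^ (4 * q) * (q : ℤ) ^ (2 * q) := by
    rw [show 4 * q / 2 = 2 * q by omega, pow_mul, pow_mul, pow_mul, ← mul_pow]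
    push_cast
    ring
  rw [hpow, mul_left_comm, pow_succ, mul_dvd_mul_iff_left (by positivity), ← even_iff_two_dvd,
    Int.not_even_iff_odd]
  exact hm.natCast.mul hq.natCast.pow

theorem barba_attaining_is_afd_general (s : ℕ) (hs : (s + 1) % 8 = 5)
    (w : Fin (s + 1) → Fin s → ℤ)
    (hpm : ∀ k i, w k i = 1 ∨ w k i = -1)
    (m : ℕ) (hm : m ^ 2 = 2 * (s + 1) - 1)
    (hdet : (Matrix.of (fun k j => Fin.cases 1 (fun i => w k i) j) :
        Matrix (Fin (s + 1)) (Fin (s + 1)) ℤ).det = (m : ℤ) * (s : ℤ) ^ (s / 2)) :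
    ∀ I : Finset (Fin s), I.Nonempty → ∃ k, ∏ i ∈ I, w k i = -1 := by
  intro I hI
  by_contra! hnot
  have hrows : ∀ k, ∏ i ∈ I, w k i = 1 := fun k =>
    (Int.prod_eq_one_or_neg_one I (w k) fun i _ => hpm k i).resolve_right (hnot k)
  have hm_odd : Odd m := (Nat.odd_pow_iff two_ne_zero).mp (by rw [hm, Nat.odd_iff]; omega)
  refine Int.not_two_pow_succ_dvd_mul_pow_half (s := s) (by omega) hm_odd ?_
  rw [← hdet]
  exact two_pow_dvd_det_of_forall_prod_eq_one w hpm I hI hrows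

/-- a saturated design with r ≡ 5 (mod 8) runs attaining the Barba
bound is an affinely full-dimensional factorial design. -/
theorem barba_attaining_is_afd (s : ℕ) (hs : (s + 1) % 8 = 5)
    (w : Fin (s + 1) → Fin s → ℤ)
    (hinj : Function.Injective w)
    (hpm : ∀ k i, w k i = 1 ∨ w k i = -1)
    (hone : w 0 = fun _ => 1)
    (hcol : ∀ i : Fin s, ∃ k, w k i = -1)
    (m : ℕ) (hm : m ^ 2 = 2 * (s + 1) - 1)
    (hdet : (Matrix.of (fun k j => Fin.cases 1 (fun i => w k i) j) :
        Matrix (Fin (s + 1)) (Fin (s + 1)) ℤ).det = (m : ℤ) * (s : ℤ) ^ (s / 2)) :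
    ∀ I : Finset (Fin s), I.Nonempty → ∃ k, ∏ i ∈ I, w k i = -1 :=
  barba_attaining_is_afd_general s hs w hpm m hm hdet
end

section
/- Let F ⊆ {−1,1}^s be nonempty with indicator function coefficients b_I = (1/2^s) Σ_{x∈F} ∏_{i∈I} x_i. Then F is affinely full-dimensional (not contained in any set of the form {x : ∏_{i∈I} x_i = ε} with I nonempty and ε ∈ {−1,1}) if and only if |b_I| < b_∅ for all nonempty I ⊆ {1,...,s}. -/
/-! On `F` every monomial `∏ i ∈ I, x i` takes the values `±1`, so `|2^s b_I| ≤ #F = 2^s b_∅`,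
with equality exactly when the monomial is constant on `F`. -/

open Finset

section SignSums

variable {α R : Type*} [Ring R] [LinearOrder R] [IsStrictOrderedRing R] (F : Finset α) (f : α → R)

theorem Finset.sum_eq_card_iff_of_le_one (h : ∀ x ∈ F, f x ≤ 1) :
    ∑ x ∈ F, f x = #F ↔ ∀ x ∈ F, f x = 1 := by
  simpa using Finset.sum_eq_sum_iff_of_le h

theorem Finset.sum_eq_neg_card_iff_of_neg_one_le (h : ∀ x ∈ F, -1 ≤ f x) :
    ∑ x ∈ F, f x = -#F ↔ ∀ x ∈ F, f x = -1 := by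
  have := Finset.sum_eq_card_iff_of_le_one F (-f) fun x hx => neg_le.mp (h x hx)
  simpa only [Pi.neg_apply, sum_neg_distrib, neg_inj, neg_eq_iff_eq_neg] using this

theorem Finset.abs_sum_lt_card_iff (h : ∀ x ∈ F, |f x| ≤ 1) :
    |∑ x ∈ F, f x| < #F ↔ ¬ (∀ x ∈ F, f x = 1) ∧ ¬ (∀ x ∈ F, f x = -1) := by
  have hle : |∑ x ∈ F, f x| ≤ #F := by
    simpa using Finset.abs_sum_le_sum_abs f F |>.trans (Finset.sum_le_sum h)
  rw [hle.lt_iff_ne, Ne, abs_eq (Nat.cast_nonneg _), not_or,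
    Finset.sum_eq_card_iff_of_le_one F f fun x hx => (abs_le.mp (h x hx)).2,
    Finset.sum_eq_neg_card_iff_of_neg_one_le F f fun x hx => (abs_le.mp (h x hx)).1]

end SignSums

theorem afd_iff_indicator_coefficients_general (s : ℕ) (F : Finset (Fin s → ℚ))
    (hpm : ∀ x ∈ F, ∀ i, x i = 1 ∨ x i = -1)
    (b : Finset (Fin s) → ℚ)
    (hb : ∀ I, b I = (1 / 2 ^ s) * ∑ x ∈ F, ∏ i ∈ I, x i) :
    (∀ I : Finset (Fin s), I.Nonempty → ∀ ε : ℚ, (ε = 1 ∨ ε = -1) →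
        ¬ ∀ x ∈ F, ∏ i ∈ I, x i = ε) ↔
      ∀ I : Finset (Fin s), I.Nonempty → |b I| < b ∅ := by
  have hscale : (0 : ℚ) < 1 / 2 ^ s := by positivity
  have hmonomial : ∀ I, ∀ x ∈ F, |∏ i ∈ I, x i| ≤ 1 := fun I x hx => by
    rw [Finset.abs_prod]
    exact (Finset.prod_eq_one fun i _ => (abs_eq zero_le_one).mpr (hpm x hx i)).le
  refine forall_congr' fun I => imp_congr_right fun _ => ?_
  simp only [hb, Finset.prod_empty, Finset.sum_const, nsmul_one]
  rw [abs_mul, abs_of_pos hscale, mul_lt_mul_iff_right₀ hscale,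
    Finset.abs_sum_lt_card_iff F _ (hmonomial I)]
  simp only [or_imp, forall_and, forall_eq]

/-- F is affinely full-dimensional iff |b_I| < b_∅ for all
nonempty I. -/
theorem afd_iff_indicator_coefficients (s : ℕ) (F : Finset (Fin s → ℚ))
    (hF : F.Nonempty)
    (hpm : ∀ x ∈ F, ∀ i, x i = 1 ∨ x i = -1)
    (b : Finset (Fin s) → ℚ)
    (hb : ∀ I, b I = (1 / 2 ^ s) * ∑ x ∈ F, ∏ i ∈ I, x i) :
    (∀ I : Finset (Fin s), I.Nonempty → ∀ ε : ℚ, (ε = 1 ∨ ε = -1) →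
        ¬ ∀ x ∈ F, ∏ i ∈ I, x i = ε) ↔
      ∀ I : Finset (Fin s), I.Nonempty → |b I| < b ∅ :=
  afd_iff_indicator_coefficients_general s F hpm b hb
end
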